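/- Theorem 6.2 (first part): For an IFS {S_j}_{j=1}^N of contractive similitudes on ℝ^d, the graph (X, 𝓔_v ∪ 𝓔_s) with slanted edges is Gromov hyperbolic. -/

import Mathlib

/-!
Every edge of the slanted graph joins consecutive levels, so `d(o, x) = |x|` and the Gromov
product is `(|x| + |y| - d(x, y)) / 2`. We compare it with the confluence level `h(x, y)`, the
largest `j` at which the cells of the ancestors `x|j`, `y|j` are at distance `≤ β rʲ`. Cells at
level `j` have diameter `O(rʲ)`, so `h` is an ultrametric up to an additive constant, and it
suffices to show `|x ∧ y| = h(x, y) + O(1)`.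

If `h(x, y) ≥ j + t`, the cells of `x|j` and `y|j+1` are `κ rʲ`-close, so a slanted edge joins
them and `d(x, y) ≤ |x| + |y| - 2 h(x, y) + 2t`. Conversely, let a geodesic from `x` to `y` reach
its lowest level `ℓ`. It has only `O(j - ℓ)` vertices at level `j`: if there were `n` of them, a
detour through ancestors at level `ℓ - O(log n)` would be shorter. Hence the gaps between the
cells along the geodesic sum to `O(rˡ)`, the ancestors at level `ℓ` are close, and
`|x| + |y| ≤ d(x, y) + 2 h(x, y)`.
-/

open Metric Filter

namespace HypIFS

/-- Euclidean space `ℝ^d`. -/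
abbrev Euc (d : ℕ) := EuclideanSpace ℝ (Fin d)

/-- The distance `dist(A, B)` between two subsets of a metric space. -/
noncomputable def setDist {E : Type*} [PseudoMetricSpace E] (A B : Set E) : ℝ :=
  sInf (Set.image2 dist A B)

variable {d N : ℕ}

/-- For a word `x = i₁⋯i_k`, the composition `S_x = S_{i₁} ∘ ⋯ ∘ S_{i_k}`. -/
def sWord (S : Fin N → Euc d → Euc d) : List (Fin N) → Euc d → Euc d :=
  fun w => w.foldr (fun i f => S i ∘ f) id

/-- For a word `x = i₁⋯i_k`, the product `r_x = r_{i₁} ⋯ r_{i_k}` of contraction ratios. -/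
def rWord (ρ : Fin N → ℝ) (w : List (Fin N)) : ℝ := (w.map ρ).prod

/-- The coding level `𝓙_n = {i₁⋯i_k : r_{i₁⋯i_k} ≤ rⁿ < r_{i₁⋯i_{k−1}}}`,
with `𝓙_0` consisting of the empty word. -/
def Jlevel (ρ : Fin N → ℝ) (r : ℝ) (n : ℕ) : Set (List (Fin N)) :=
  if n = 0 then {([] : List (Fin N))}
  else {w | rWord ρ w ≤ r ^ n ∧ r ^ n < rWord ρ w.dropLast}

/-- The vertical (parent–child) edge relation: `x ∈ 𝓙_n` is the initial segment
of `y ∈ 𝓙_{n+1}`. -/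
def EV (ρ : Fin N → ℝ) (r : ℝ) (x y : List (Fin N)) : Prop :=
  ∃ n : ℕ, x ∈ Jlevel ρ r n ∧ y ∈ Jlevel ρ r (n + 1) ∧ x <+: y

/-- The horizontal edge relation: `x ≠ y` in the same level `𝓙_n` with
`dist(K_x, K_y) ≤ κ rⁿ`. -/
def EH (S : Fin N → Euc d → Euc d) (ρ : Fin N → ℝ) (r κ : ℝ) (K : Set (Euc d))
    (x y : List (Fin N)) : Prop :=
  ∃ n : ℕ, x ∈ Jlevel ρ r n ∧ y ∈ Jlevel ρ r n ∧ x ≠ y ∧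
    setDist (sWord S x '' K) (sWord S y '' K) ≤ κ * r ^ n

/-- The augmented tree `(X, 𝓔)`, `𝓔 = 𝓔_v ∪ 𝓔_h`, as a graph on the word space
(words belonging to no level `𝓙_n` are isolated vertices). -/
def augIFS (S : Fin N → Euc d → Euc d) (ρ : Fin N → ℝ) (r κ : ℝ) (K : Set (Euc d)) :
    SimpleGraph (List (Fin N)) where
  Adj x y := (EV ρ r x y ∨ EV ρ r y x ∨ EH S ρ r κ K x y ∨ EH S ρ r κ K y x) ∧ x ≠ y
  symm := by
    constructor
    rintro x y ⟨h1 | h2 | h3 | h4, hne⟩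
    · exact ⟨Or.inr (Or.inl h1), hne.symm⟩
    · exact ⟨Or.inl h2, hne.symm⟩
    · exact ⟨Or.inr (Or.inr (Or.inr h3)), hne.symm⟩
    · exact ⟨Or.inr (Or.inr (Or.inl h4)), hne.symm⟩
  loopless := ⟨fun x h => h.2 rfl⟩

/-- A graph is of bounded degree if `sup_x deg(x) < ∞`. -/
def BddDeg {V : Type*} (G : SimpleGraph V) : Prop :=
  ∃ M : ℕ, ∀ x : V, {y | G.Adj x y}.Finite ∧ {y | G.Adj x y}.ncard ≤ M

/-- The slanted edge set `𝓔_s`: levels differ by one, not a vertical edge, and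
`dist(K_x, K_y) ≤ κ r^{min(|x|,|y|)}`. -/
def ES (S : Fin N → Euc d → Euc d) (ρ : Fin N → ℝ) (r κ : ℝ) (K : Set (Euc d))
    (x y : List (Fin N)) : Prop :=
  ∃ n : ℕ, ((x ∈ Jlevel ρ r n ∧ y ∈ Jlevel ρ r (n + 1)) ∨
            (y ∈ Jlevel ρ r n ∧ x ∈ Jlevel ρ r (n + 1))) ∧
    ¬ EV ρ r x y ∧ ¬ EV ρ r y x ∧
    setDist (sWord S x '' K) (sWord S y '' K) ≤ κ * r ^ n

/-- The graph `(X, 𝓔_v ∪ 𝓔_s)` with slanted edges. -/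
def slantIFS (S : Fin N → Euc d → Euc d) (ρ : Fin N → ℝ) (r κ : ℝ) (K : Set (Euc d)) :
    SimpleGraph (List (Fin N)) where
  Adj x y := (EV ρ r x y ∨ EV ρ r y x ∨ ES S ρ r κ K x y ∨ ES S ρ r κ K y x) ∧ x ≠ y
  symm := by
    constructor
    rintro x y ⟨h1 | h2 | h3 | h4, hne⟩
    · exact ⟨Or.inr (Or.inl h1), hne.symm⟩
    · exact ⟨Or.inl h2, hne.symm⟩
    · exact ⟨Or.inr (Or.inr (Or.inr h3)), hne.symm⟩
    · exact ⟨Or.inr (Or.inr (Or.inl h4)), hne.symm⟩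
  loopless := ⟨fun x h => h.2 rfl⟩

/-- The Gromov product `|x ∧ y| = ½(|x| + |y| − d(x,y))` with respect to a root `o`. -/
noncomputable def gprod {V : Type*} (G : SimpleGraph V) (o x y : V) : ℝ :=
  ((G.dist o x : ℝ) + (G.dist o y : ℝ) - (G.dist x y : ℝ)) / 2

/-- Gromov hyperbolicity of a graph with basepoint `o`. -/
def GromovHyperbolic {V : Type*} (G : SimpleGraph V) (o : V) : Prop :=
  ∃ δ : ℝ, 0 ≤ δ ∧ ∀ x y z : V,
    min (gprod G o x z) (gprod G o z y) - δ ≤ gprod G o x y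

/-- The graph `(X, 𝓔_v ∪ 𝓔_s)` restricted to the actual vertex set
`X = ⋃_n 𝓙_n`. -/
def slantV (S : Fin N → Euc d → Euc d) (ρ : Fin N → ℝ) (r κ : ℝ) (K : Set (Euc d)) :
    SimpleGraph {w : List (Fin N) // ∃ n : ℕ, w ∈ Jlevel ρ r n} where
  Adj x y := (slantIFS S ρ r κ K).Adj x.1 y.1
  symm := ⟨fun _ _ h => (slantIFS S ρ r κ K).adj_symm h⟩
  loopless := ⟨fun x h => (slantIFS S ρ r κ K).irrefl (v := x.1) h⟩

open scoped Finset

section SetDist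

variable {E : Type*} [PseudoMetricSpace E] {A B C A' B' : Set E}

theorem setDist_comm (A B : Set E) : setDist A B = setDist B A := by
  unfold setDist
  rw [Set.image2_comm dist_comm]

theorem setDist_le_dist {a b : E} (ha : a ∈ A) (hb : b ∈ B) : setDist A B ≤ dist a b :=
  csInf_le ⟨0, by rintro _ ⟨_, _, _, _, rfl⟩; exact dist_nonneg⟩ (Set.mem_image2_of_mem ha hb)

theorem setDist_nonpos_of_mem {p : E} (hA : p ∈ A) (hB : p ∈ B) : setDist A B ≤ 0 := by
  simpa using setDist_le_dist hA hB

theorem setDist_self_nonpos (hA : A.Nonempty) : setDist A A ≤ 0 :=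
  setDist_nonpos_of_mem hA.some_mem hA.some_mem

theorem setDist_le_setDist_of_subset (hA : A.Nonempty) (hB : B.Nonempty) (hAA' : A ⊆ A')
    (hBB' : B ⊆ B') : setDist A' B' ≤ setDist A B := by
  refine le_csInf (hA.image2 hB) ?_
  rintro _ ⟨a, ha, b, hb, rfl⟩
  exact setDist_le_dist (hAA' ha) (hBB' hb)

theorem setDist_triangle (hA : A.Nonempty) (hB : B.Nonempty) (hC : C.Nonempty)
    (hBb : Bornology.IsBounded B) :
    setDist A C ≤ setDist A B + diam B + setDist B C := by
  refine le_of_forall_pos_le_add fun ε hε => ?_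
  obtain ⟨_, ⟨a, ha, b, hb, rfl⟩, hab⟩ := Real.lt_sInf_add_pos (hA.image2 hB) (half_pos hε)
  obtain ⟨_, ⟨b', hb', c, hc, rfl⟩, hbc⟩ := Real.lt_sInf_add_pos (hB.image2 hC) (half_pos hε)
  calc setDist A C ≤ dist a c := setDist_le_dist ha hc
    _ ≤ dist a b + dist b b' + dist b' c := dist_triangle4 a b b' c
    _ ≤ (setDist A B + ε / 2) + diam B + (setDist B C + ε / 2) := by
        gcongr
        exacts [hab.le, dist_le_diam_of_mem hBb hb hb', hbc.le]
    _ = setDist A B + diam B + setDist B C + ε := by ring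

end SetDist

section Asymptotics

variable {r : ℝ}

theorem eventually_mul_pow_le (hr0 : 0 ≤ r) (hr1 : r < 1) (B : ℝ) {c : ℝ} (hc : 0 < c) :
    ∀ᶠ n : ℕ in atTop, B * r ^ n ≤ c := by
  have h := (tendsto_pow_atTop_nhds_zero_of_lt_one hr0 hr1).const_mul B
  rw [mul_zero] at h
  exact h.eventually_le_const hc

theorem eventually_mul_mul_pow_le (hr0 : 0 ≤ r) (hr1 : r < 1) (B : ℝ) {c : ℝ} (hc : 0 < c) :
    ∀ᶠ n : ℕ in atTop, B * n * r ^ n ≤ c := by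
  have h := (tendsto_self_mul_const_pow_of_lt_one hr0 hr1).const_mul B
  rw [mul_zero] at h
  simpa only [mul_assoc] using h.eventually_le_const hc

/-- The hypothesis says that `n ≤ J + 2 log_{1/r} n + O(1)`. -/
theorem exists_le_two_mul_add_of_le_add_two_mul_log (hr0 : 0 ≤ r) (hr1 : r < 1) {B c : ℝ}
    (hB : 0 ≤ B) (hc : 0 < c) :
    ∃ C : ℕ, ∀ n J : ℕ, (∀ s : ℕ, 1 ≤ s → B * n * r ^ s ≤ c → n ≤ J + 2 * s) →
      n ≤ 2 * J + C := by
  obtain ⟨M, hM⟩ := (eventually_mul_mul_pow_le hr0 hr1 (8 * B) hc).exists_forall_of_atTop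
  refine ⟨4 * M + 4, fun n J hn => ?_⟩
  by_contra! hlt
  set s := (n - J - 1) / 2
  have hn8 : n ≤ 8 * s := by omega
  have hsmall : B * n * r ^ s ≤ c := calc
    B * n * r ^ s ≤ B * (8 * s : ℕ) * r ^ s := by gcongr
    _ = 8 * B * s * r ^ s := by push_cast; ring
    _ ≤ c := hM s (by omega)
  have := hn s (by omega) hsmall
  omega

theorem sum_pow_le_of_card_fiber_le {ι : Type*} (s : Finset ι) (m : ι → ℕ) (hr0 : 0 ≤ r)
    (hr1 : r < 1) {ℓ a C : ℕ} (hm : ∀ i ∈ s, ℓ ≤ m i)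
    (hcard : ∀ j, #{i ∈ s | m i = j} ≤ a * (j - ℓ) + C) :
    ∑ i ∈ s, r ^ m i ≤ (a * (r / (1 - r) ^ 2) + C * (1 - r)⁻¹) * r ^ ℓ := by
  classical
  have hseries : HasSum (fun k : ℕ => ((a * k + C : ℕ) : ℝ) * r ^ k)
      (a * (r / (1 - r) ^ 2) + C * (1 - r)⁻¹) := by
    have habs : ‖r‖ < 1 := by rwa [Real.norm_eq_abs, abs_of_nonneg hr0]
    have hterm : (fun k : ℕ => ((a * k + C : ℕ) : ℝ) * r ^ k)
        = fun k : ℕ => (a : ℝ) * (k * r ^ k) + C * r ^ k := by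
      funext k
      push_cast
      ring
    rw [hterm]
    exact ((hasSum_coe_mul_geometric_of_norm_lt_one habs).mul_left (a : ℝ)).add
      ((hasSum_geometric_of_lt_one hr0 hr1).mul_left (C : ℝ))
  have hmaps : ∀ i ∈ s, m i ∈ Finset.Ico ℓ (s.sup m + 1) := fun i hi =>
    Finset.mem_Ico.2 ⟨hm i hi, Nat.lt_succ_of_le (Finset.le_sup hi)⟩
  calc ∑ i ∈ s, r ^ m i = ∑ j ∈ Finset.Ico ℓ (s.sup m + 1), (#{i ∈ s | m i = j} : ℝ) * r ^ j := by
        rw [← Finset.sum_fiberwise_of_maps_to hmaps]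
        refine Finset.sum_congr rfl fun j _ => ?_
        rw [Finset.sum_congr rfl fun i hi => by rw [(Finset.mem_filter.1 hi).2],
          Finset.sum_const, nsmul_eq_mul]
    _ ≤ ∑ j ∈ Finset.Ico ℓ (s.sup m + 1), ((a * (j - ℓ) + C : ℕ) : ℝ) * r ^ j := by
        gcongr with j
        exact_mod_cast hcard j
    _ = (∑ k ∈ Finset.range (s.sup m + 1 - ℓ), ((a * k + C : ℕ) : ℝ) * r ^ k) * r ^ ℓ := by
        rw [Finset.sum_Ico_eq_sum_range, Finset.sum_mul]
        refine Finset.sum_congr rfl fun k _ => ?_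
        rw [Nat.add_sub_cancel_left, pow_add]
        ring
    _ ≤ _ := by
        gcongr
        exact sum_le_hasSum _ (fun k _ => by positivity) hseries

end Asymptotics

theorem _root_.Finset.card_le_add_one_of_forall_sub_le {s : Finset ℕ} {W : ℕ}
    (h : ∀ i ∈ s, ∀ j ∈ s, i ≤ j → j - i ≤ W) : #s ≤ W + 1 := by
  rcases s.eq_empty_or_nonempty with rfl | hs
  · simp
  have hsub : s ⊆ Finset.Icc (s.min' hs) (s.min' hs + W) := fun j hj =>
    Finset.mem_Icc.2 ⟨s.min'_le j hj, by
      have := h _ (s.min'_mem hs) j hj (s.min'_le j hj); omega⟩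
  have := Finset.card_le_card hsub
  rw [Nat.card_Icc] at this
  omega

section Walks

variable {V : Type*} {G : SimpleGraph V} {u v : V}

theorem _root_.SimpleGraph.Walk.le_add_length_of_adj {f : V → ℕ}
    (hf : ∀ ⦃a b⦄, G.Adj a b → f a ≤ f b + 1) (p : G.Walk u v) : f u ≤ f v + p.length := by
  induction p with
  | nil => simp
  | cons h _ ih =>
    have := hf h
    rw [SimpleGraph.Walk.length_cons]
    omega

theorem _root_.SimpleGraph.Walk.dist_getVert_le (p : G.Walk u v) {a b : ℕ} (hab : a ≤ b) :
    G.dist (p.getVert a) (p.getVert b) ≤ b - a := by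
  have h := SimpleGraph.dist_le ((p.drop a).take (b - a))
  rw [SimpleGraph.Walk.take_length, SimpleGraph.Walk.drop_getVert, Nat.add_sub_cancel' hab] at h
  exact h.trans (min_le_left _ _)

theorem _root_.SimpleGraph.Walk.sub_le_dist_getVert (hG : G.Connected) (p : G.Walk u v)
    (hp : p.length = G.dist u v) {a b : ℕ} (hab : a ≤ b) (hb : b ≤ p.length) :
    b - a ≤ G.dist (p.getVert a) (p.getVert b) := by
  have h1 := p.dist_getVert_le (Nat.zero_le a)
  have h2 := p.dist_getVert_le hb
  rw [p.getVert_zero] at h1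
  rw [p.getVert_length] at h2
  have := hG.dist_triangle (u := u) (v := p.getVert a) (w := p.getVert b)
  have := hG.dist_triangle (u := u) (v := p.getVert b) (w := v)
  omega

end Walks

theorem gromovHyperbolic_of_approx_ultrametric {V : Type*} (G : SimpleGraph V) (o : V)
    (f : V → V → ℝ) {s C : ℝ} (hs : 0 ≤ s) (hC : 0 ≤ C)
    (hf : ∀ x y z, min (f x z) (f z y) ≤ f x y + s)
    (hle : ∀ x y, gprod G o x y ≤ f x y) (hge : ∀ x y, f x y - C ≤ gprod G o x y) :
    GromovHyperbolic G o :=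
  ⟨s + C, add_nonneg hs hC, fun x y z => by
    have := min_le_min (hle x z) (hle z y)
    linarith [hf x y z, hge x y]⟩

section Words

variable {ρ : Fin N → ℝ} {S : Fin N → Euc d → Euc d} {K : Set (Euc d)}

@[simp]
theorem rWord_nil (ρ : Fin N → ℝ) : rWord ρ [] = 1 := rfl

@[simp]
theorem rWord_cons (ρ : Fin N → ℝ) (j : Fin N) (w : List (Fin N)) :
    rWord ρ (j :: w) = ρ j * rWord ρ w := by
  simp [rWord]

theorem rWord_append (ρ : Fin N → ℝ) (u v : List (Fin N)) :
    rWord ρ (u ++ v) = rWord ρ u * rWord ρ v := by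
  simp [rWord]

theorem rWord_nonneg (hρ0 : ∀ j, 0 ≤ ρ j) (w : List (Fin N)) : 0 ≤ rWord ρ w :=
  List.prod_nonneg (by simpa using fun j _ => hρ0 j)

theorem rWord_le_one (hρ0 : ∀ j, 0 ≤ ρ j) (hρ1 : ∀ j, ρ j ≤ 1) (w : List (Fin N)) :
    rWord ρ w ≤ 1 := by
  induction w with
  | nil => simp
  | cons j w ih =>
    rw [rWord_cons]
    exact mul_le_one₀ (hρ1 j) (rWord_nonneg hρ0 w) ih

theorem rWord_le_rWord_of_prefix (hρ0 : ∀ j, 0 ≤ ρ j) (hρ1 : ∀ j, ρ j ≤ 1)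
    {u v : List (Fin N)} (h : u <+: v) : rWord ρ v ≤ rWord ρ u := by
  obtain ⟨w, rfl⟩ := h
  rw [rWord_append]
  exact mul_le_of_le_one_right (rWord_nonneg hρ0 u) (rWord_le_one hρ0 hρ1 w)

theorem mul_rWord_dropLast_le {r : ℝ} (hρ0 : ∀ j, 0 ≤ ρ j) (hr : ∀ j, r ≤ ρ j)
    {w : List (Fin N)} (hw : w ≠ []) : r * rWord ρ w.dropLast ≤ rWord ρ w := by
  conv_rhs => rw [← List.dropLast_append_getLast hw, rWord_append]
  rw [mul_comm]
  simpa using mul_le_mul_of_nonneg_left (hr _) (rWord_nonneg hρ0 w.dropLast)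

theorem sWord_append (S : Fin N → Euc d → Euc d) (u v : List (Fin N)) :
    sWord S (u ++ v) = sWord S u ∘ sWord S v := by
  induction u with
  | nil => rfl
  | cons j u ih => exact congrArg (S j ∘ ·) ih

theorem dist_sWord (hS : ∀ j a b, dist (S j a) (S j b) = ρ j * dist a b)
    (w : List (Fin N)) (a b : Euc d) :
    dist (sWord S w a) (sWord S w b) = rWord ρ w * dist a b := by
  induction w with
  | nil => simp [sWord]
  | cons j w ih =>
    change dist (S j (sWord S w a)) (S j (sWord S w b)) = _
    rw [hS, ih, rWord_cons, mul_assoc]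

theorem image_sWord_subset (hK : ∀ j, S j '' K ⊆ K) (w : List (Fin N)) : sWord S w '' K ⊆ K := by
  induction w with
  | nil => simp [sWord]
  | cons j w ih =>
    change (S j ∘ sWord S w) '' K ⊆ K
    rw [Set.image_comp]
    exact (Set.image_mono ih).trans (hK j)

theorem image_sWord_subset_of_prefix (hK : ∀ j, S j '' K ⊆ K) {u v : List (Fin N)}
    (h : u <+: v) : sWord S v '' K ⊆ sWord S u '' K := by
  obtain ⟨w, rfl⟩ := h
  rw [sWord_append, Set.image_comp]
  exact Set.image_mono (image_sWord_subset hK w)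

theorem diam_image_sWord_le (hρ0 : ∀ j, 0 ≤ ρ j)
    (hS : ∀ j a b, dist (S j a) (S j b) = ρ j * dist a b) (hK : Bornology.IsBounded K)
    (w : List (Fin N)) : diam (sWord S w '' K) ≤ rWord ρ w * diam K := by
  refine diam_le_of_forall_dist_le (mul_nonneg (rWord_nonneg hρ0 w) diam_nonneg) ?_
  rintro _ ⟨a, ha, rfl⟩ _ ⟨b, hb, rfl⟩
  rw [dist_sWord hS]
  exact mul_le_mul_of_nonneg_left (dist_le_diam_of_mem hK ha hb) (rWord_nonneg hρ0 w)

end Words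

structure SlantedIFS (d N : ℕ) where
  S : Fin N → Euc d → Euc d
  ρ : Fin N → ℝ
  r : ℝ
  κ : ℝ
  K : Set (Euc d)
  ρ_pos : ∀ j, 0 < ρ j
  ρ_lt_one : ∀ j, ρ j < 1
  dist_S : ∀ j a b, dist (S j a) (S j b) = ρ j * dist a b
  isLeast_r : IsLeast (Set.range ρ) r
  κ_pos : 0 < κ
  isCompact_K : IsCompact K
  K_nonempty : K.Nonempty
  K_eq : K = ⋃ j, S j '' K

namespace SlantedIFS

variable (c : SlantedIFS d N)

theorem r_pos : 0 < c.r := by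
  obtain ⟨j, hj⟩ := c.isLeast_r.1
  exact hj ▸ c.ρ_pos j

theorem r_lt_one : c.r < 1 := by
  obtain ⟨j, hj⟩ := c.isLeast_r.1
  exact hj ▸ c.ρ_lt_one j

theorem r_le_ρ (j : Fin N) : c.r ≤ c.ρ j := c.isLeast_r.2 ⟨j, rfl⟩

theorem ρ_nonneg (j : Fin N) : 0 ≤ c.ρ j := (c.ρ_pos j).le

theorem pow_r_anti {m n : ℕ} (h : m ≤ n) : c.r ^ n ≤ c.r ^ m :=
  pow_le_pow_of_le_one c.r_pos.le c.r_lt_one.le h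

theorem image_S_subset (j : Fin N) : c.S j '' c.K ⊆ c.K := by
  conv_rhs => rw [c.K_eq]
  exact Set.subset_iUnion (fun j => c.S j '' c.K) j

/-! ### Coding levels -/

variable {c} {u u' w : List (Fin N)} {m n j : ℕ}

theorem mem_Jlevel_zero : w ∈ Jlevel c.ρ c.r 0 ↔ w = [] := by
  simp [Jlevel]

theorem mem_Jlevel_of_ne_zero (hn : n ≠ 0) :
    w ∈ Jlevel c.ρ c.r n ↔ rWord c.ρ w ≤ c.r ^ n ∧ c.r ^ n < rWord c.ρ w.dropLast := by
  simp [Jlevel, hn]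

theorem rWord_le_of_mem_Jlevel (h : w ∈ Jlevel c.ρ c.r n) : rWord c.ρ w ≤ c.r ^ n := by
  rcases eq_or_ne n 0 with rfl | hn
  · simp [mem_Jlevel_zero.1 h]
  · exact ((mem_Jlevel_of_ne_zero hn).1 h).1

theorem pow_succ_lt_rWord_of_mem_Jlevel (h : w ∈ Jlevel c.ρ c.r n) :
    c.r ^ (n + 1) < rWord c.ρ w := by
  rcases eq_or_ne n 0 with rfl | hn
  · simpa [mem_Jlevel_zero.1 h] using c.r_lt_one
  obtain ⟨hle, hlt⟩ := (mem_Jlevel_of_ne_zero hn).1 h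
  have hw : w ≠ [] := by
    rintro rfl
    exact (pow_lt_one₀ c.r_pos.le c.r_lt_one hn).not_ge (by simpa using hle)
  calc c.r ^ (n + 1) = c.r * c.r ^ n := pow_succ' _ _
    _ < c.r * rWord c.ρ w.dropLast := mul_lt_mul_of_pos_left hlt c.r_pos
    _ ≤ rWord c.ρ w := mul_rWord_dropLast_le c.ρ_nonneg c.r_le_ρ hw

theorem eq_of_mem_Jlevel (hm : w ∈ Jlevel c.ρ c.r m) (hn : w ∈ Jlevel c.ρ c.r n) : m = n := by
  have key : ∀ {a b}, w ∈ Jlevel c.ρ c.r a → w ∈ Jlevel c.ρ c.r b → b ≤ a := fun ha hb =>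
    Nat.lt_succ_iff.1 <| (pow_lt_pow_iff_right_of_lt_one₀ c.r_pos c.r_lt_one).1 <|
      (rWord_le_of_mem_Jlevel hb).trans_lt' (pow_succ_lt_rWord_of_mem_Jlevel ha)
  exact le_antisymm (key hn hm) (key hm hn)

theorem eq_of_prefix_of_mem_Jlevel (hu : u <+: w) (hu' : u' <+: w)
    (hj : u ∈ Jlevel c.ρ c.r j) (hj' : u' ∈ Jlevel c.ρ c.r j) : u = u' := by
  have key : ∀ {a b : List (Fin N)}, a <+: b → a ∈ Jlevel c.ρ c.r j →
      b ∈ Jlevel c.ρ c.r j → a = b := by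
    intro a b hab ha hb
    by_contra hne
    rcases eq_or_ne j 0 with rfl | hj0
    · exact hne ((mem_Jlevel_zero.1 ha).trans (mem_Jlevel_zero.1 hb).symm)
    have hlen : a.length < b.length := lt_of_le_of_ne hab.length_le (mt hab.eq_of_length hne)
    have hdrop : a <+: b.dropLast := by
      rw [List.dropLast_eq_take]
      exact List.prefix_take_iff.2 ⟨hab, by omega⟩
    have := rWord_le_rWord_of_prefix c.ρ_nonneg (fun j => (c.ρ_lt_one j).le) hdrop
    linarith [rWord_le_of_mem_Jlevel ha, ((mem_Jlevel_of_ne_zero hj0).1 hb).2]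
  rcases List.prefix_or_prefix_of_prefix hu hu' with h | h
  · exact key h hj hj'
  · exact (key h hj' hj).symm

/-- The prefix of `w` in `𝓙_j` is cut at the first position where `r_{w₁⋯wᵢ} ≤ rʲ`. -/
theorem exists_prefix_mem_Jlevel (hw : w ∈ Jlevel c.ρ c.r n) (hj : j ≤ n) :
    ∃ u, u <+: w ∧ u ∈ Jlevel c.ρ c.r j := by
  rcases eq_or_ne j 0 with rfl | hj0
  · exact ⟨[], List.nil_prefix, mem_Jlevel_zero.2 rfl⟩
  classical
  have hP : ∃ i, rWord c.ρ (w.take i) ≤ c.r ^ j :=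
    ⟨w.length, by simpa using (rWord_le_of_mem_Jlevel hw).trans (c.pow_r_anti hj)⟩
  have hlen : Nat.find hP ≤ w.length :=
    Nat.find_min' hP (by simpa using (rWord_le_of_mem_Jlevel hw).trans (c.pow_r_anti hj))
  have hpos : Nat.find hP ≠ 0 := by
    intro h0
    have := Nat.find_spec hP
    rw [h0] at this
    exact (pow_lt_one₀ c.r_pos.le c.r_lt_one hj0).not_ge (by simpa using this)
  refine ⟨w.take (Nat.find hP), List.take_prefix _ w, (mem_Jlevel_of_ne_zero hj0).2
    ⟨Nat.find_spec hP, ?_⟩⟩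
  have hmin := Nat.find_min hP (Nat.sub_one_lt hpos)
  rw [not_le] at hmin
  simpa [List.dropLast_eq_take, List.take_take, Nat.min_eq_left hlen] using hmin

/-! ### Vertices, ancestors and cells -/

variable (c)

abbrev X := {w : List (Fin N) // ∃ n : ℕ, w ∈ Jlevel c.ρ c.r n}

noncomputable def G : SimpleGraph c.X := slantV c.S c.ρ c.r c.κ c.K

noncomputable def lev (x : c.X) : ℕ := x.2.choose

def root : c.X := ⟨[], 0, by simp [Jlevel]⟩

noncomputable def anc (x : c.X) (j : ℕ) : c.X :=
  if h : j ≤ c.lev x then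
    ⟨(exists_prefix_mem_Jlevel x.2.choose_spec h).choose, j,
      (exists_prefix_mem_Jlevel x.2.choose_spec h).choose_spec.2⟩
  else x

def cell (x : c.X) : Set (Euc d) := sWord c.S x.1 '' c.K

noncomputable def D : ℝ := diam c.K

variable {c} {x y : c.X} {i : ℕ}

theorem lev_spec (x : c.X) : x.1 ∈ Jlevel c.ρ c.r (c.lev x) := x.2.choose_spec

theorem lev_eq_of_mem (h : x.1 ∈ Jlevel c.ρ c.r n) : c.lev x = n :=
  eq_of_mem_Jlevel (lev_spec x) h

theorem val_ne_of_lev_ne (h : c.lev x ≠ c.lev y) : x.1 ≠ y.1 := fun hxy =>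
  h (lev_eq_of_mem (hxy ▸ lev_spec y))

@[simp]
theorem lev_root : c.lev c.root = 0 := lev_eq_of_mem (mem_Jlevel_zero.2 rfl)

theorem anc_prefix (h : j ≤ c.lev x) : (c.anc x j).1 <+: x.1 := by
  rw [anc, dif_pos h]
  exact (exists_prefix_mem_Jlevel (lev_spec x) h).choose_spec.1

theorem anc_mem (h : j ≤ c.lev x) : (c.anc x j).1 ∈ Jlevel c.ρ c.r j := by
  rw [anc, dif_pos h]
  exact (exists_prefix_mem_Jlevel (lev_spec x) h).choose_spec.2

theorem lev_anc (h : j ≤ c.lev x) : c.lev (c.anc x j) = j := lev_eq_of_mem (anc_mem h)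

theorem anc_lev (x : c.X) : c.anc x (c.lev x) = x :=
  Subtype.ext (eq_of_prefix_of_mem_Jlevel (anc_prefix le_rfl) List.prefix_rfl (anc_mem le_rfl)
    (lev_spec x))

theorem anc_zero (x : c.X) : c.anc x 0 = c.root :=
  Subtype.ext (eq_of_prefix_of_mem_Jlevel (anc_prefix (Nat.zero_le _)) List.nil_prefix
    (anc_mem (Nat.zero_le _)) (mem_Jlevel_zero.2 rfl))

theorem anc_anc (hij : i ≤ j) (hj : j ≤ c.lev x) : c.anc (c.anc x j) i = c.anc x i := by
  have hi : i ≤ c.lev (c.anc x j) := (lev_anc hj).symm ▸ hij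
  exact Subtype.ext (eq_of_prefix_of_mem_Jlevel ((anc_prefix hi).trans (anc_prefix hj))
    (anc_prefix (hij.trans hj)) (anc_mem hi) (anc_mem (hij.trans hj)))

theorem cell_nonempty (x : c.X) : (c.cell x).Nonempty := c.K_nonempty.image _

theorem isBounded_cell (x : c.X) : Bornology.IsBounded (c.cell x) :=
  c.isCompact_K.isBounded.subset (image_sWord_subset c.image_S_subset x.1)

@[simp]
theorem cell_root : c.cell c.root = c.K := Set.image_id _

theorem cell_subset_cell_anc (h : j ≤ c.lev x) : c.cell x ⊆ c.cell (c.anc x j) :=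
  image_sWord_subset_of_prefix c.image_S_subset (anc_prefix h)

theorem cell_anc_subset_cell_anc (hij : i ≤ j) (hj : j ≤ c.lev x) :
    c.cell (c.anc x j) ⊆ c.cell (c.anc x i) := by
  rw [← anc_anc hij hj]
  exact cell_subset_cell_anc ((lev_anc hj).symm ▸ hij)

theorem diam_cell_le (x : c.X) : diam (c.cell x) ≤ c.D * c.r ^ c.lev x := by
  rw [mul_comm]
  exact (diam_image_sWord_le c.ρ_nonneg c.dist_S c.isCompact_K.isBounded x.1).trans
    (mul_le_mul_of_nonneg_right (rWord_le_of_mem_Jlevel (lev_spec x)) diam_nonneg)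

/-! ### Distances in the slanted graph -/

theorem adj_iff : c.G.Adj x y ↔ (EV c.ρ c.r x.1 y.1 ∨ EV c.ρ c.r y.1 x.1 ∨
    ES c.S c.ρ c.r c.κ c.K x.1 y.1 ∨ ES c.S c.ρ c.r c.κ c.K y.1 x.1) ∧ x.1 ≠ y.1 :=
  Iff.rfl

/-- Across a vertical edge the cells are nested, so their distance vanishes. -/
theorem exists_lev_setDist_of_adj (h : c.G.Adj x y) :
    ∃ n, (c.lev x = n ∧ c.lev y = n + 1 ∨ c.lev y = n ∧ c.lev x = n + 1) ∧
      setDist (c.cell x) (c.cell y) ≤ c.κ * c.r ^ n := by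
  have hκr : ∀ n : ℕ, 0 ≤ c.κ * c.r ^ n := fun n =>
    mul_nonneg c.κ_pos.le (pow_pos c.r_pos n).le
  obtain ⟨h | h | h | h, -⟩ := adj_iff.1 h
  · obtain ⟨n, hx, hy, hpre⟩ := h
    obtain ⟨p, hp⟩ := cell_nonempty y
    exact ⟨n, .inl ⟨lev_eq_of_mem hx, lev_eq_of_mem hy⟩, (setDist_nonpos_of_mem
      (image_sWord_subset_of_prefix c.image_S_subset hpre hp) hp).trans (hκr n)⟩
  · obtain ⟨n, hy, hx, hpre⟩ := h
    obtain ⟨p, hp⟩ := cell_nonempty x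
    exact ⟨n, .inr ⟨lev_eq_of_mem hy, lev_eq_of_mem hx⟩, (setDist_nonpos_of_mem hp
      (image_sWord_subset_of_prefix c.image_S_subset hpre hp)).trans (hκr n)⟩
  · obtain ⟨n, ⟨hx, hy⟩ | ⟨hy, hx⟩, -, -, hd⟩ := h
    · exact ⟨n, .inl ⟨lev_eq_of_mem hx, lev_eq_of_mem hy⟩, hd⟩
    · exact ⟨n, .inr ⟨lev_eq_of_mem hy, lev_eq_of_mem hx⟩, hd⟩
  · obtain ⟨n, ⟨hy, hx⟩ | ⟨hx, hy⟩, -, -, hd⟩ := h <;> rw [setDist_comm] at hd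
    · exact ⟨n, .inr ⟨lev_eq_of_mem hy, lev_eq_of_mem hx⟩, hd⟩
    · exact ⟨n, .inl ⟨lev_eq_of_mem hx, lev_eq_of_mem hy⟩, hd⟩

theorem lev_le_lev_add_one_of_adj (h : c.G.Adj x y) : c.lev x ≤ c.lev y + 1 := by
  obtain ⟨n, hn, -⟩ := exists_lev_setDist_of_adj h
  omega

theorem setDist_cell_le_of_adj (h : c.G.Adj x y) :
    setDist (c.cell x) (c.cell y) ≤ c.κ / c.r * c.r ^ c.lev x := by
  obtain ⟨n, hn, hd⟩ := exists_lev_setDist_of_adj h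
  calc setDist (c.cell x) (c.cell y) ≤ c.κ * c.r ^ n := hd
    _ = c.κ / c.r * c.r ^ (n + 1) := by field_simp [c.r_pos.ne']; ring
    _ ≤ c.κ / c.r * c.r ^ c.lev x :=
        mul_le_mul_of_nonneg_left (c.pow_r_anti (by omega)) (div_nonneg c.κ_pos.le c.r_pos.le)

theorem adj_of_lev_eq_add_one (hxy : c.lev y = c.lev x + 1)
    (hd : setDist (c.cell x) (c.cell y) ≤ c.κ * c.r ^ c.lev x) : c.G.Adj x y := by
  refine adj_iff.2 ⟨?_, val_ne_of_lev_ne (by omega)⟩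
  have hx := lev_spec x
  have hy : y.1 ∈ Jlevel c.ρ c.r (c.lev x + 1) := hxy ▸ lev_spec y
  by_cases hEV : EV c.ρ c.r x.1 y.1
  · exact .inl hEV
  refine .inr (.inr (.inl ⟨c.lev x, .inl ⟨hx, hy⟩, hEV, ?_, hd⟩))
  rintro ⟨m, hym, hxm, -⟩
  have := eq_of_mem_Jlevel hym hy
  have := eq_of_mem_Jlevel hxm hx
  omega

theorem adj_anc (h : c.lev x = n + 1) : c.G.Adj x (c.anc x n) := by
  have hn : n ≤ c.lev x := by omega
  obtain ⟨p, hp⟩ := cell_nonempty x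
  refine (adj_of_lev_eq_add_one (by rw [lev_anc hn, h]) ?_).symm
  exact (setDist_nonpos_of_mem (cell_subset_cell_anc hn hp) hp).trans
    (mul_nonneg c.κ_pos.le (pow_pos c.r_pos _).le)

theorem exists_walk_anc (k : ℕ) (x : c.X) (j : ℕ) (hj : j + k = c.lev x) :
    ∃ p : c.G.Walk x (c.anc x j), p.length = k := by
  induction k generalizing x with
  | zero =>
    rw [add_zero] at hj
    exact ⟨.copy .nil rfl (hj ▸ anc_lev x).symm, by simp⟩
  | succ k ih =>
    have hk : j + k ≤ c.lev x := by omega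
    obtain ⟨q, hq⟩ := ih (c.anc x (j + k)) (lev_anc hk).symm
    refine ⟨.cons (adj_anc (by omega)) (q.copy rfl (anc_anc (by omega) hk)), ?_⟩
    simp [hq]

theorem dist_anc_le (h : j ≤ c.lev x) : c.G.dist x (c.anc x j) ≤ c.lev x - j := by
  obtain ⟨p, hp⟩ := exists_walk_anc (c.lev x - j) x j (by omega)
  exact hp ▸ SimpleGraph.dist_le p

theorem connected : c.G.Connected := by
  have hroot : ∀ x, c.G.Reachable x c.root := fun x => by
    obtain ⟨p, -⟩ := exists_walk_anc (c.lev x) x 0 (zero_add _)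
    exact ⟨p.copy rfl (anc_zero x)⟩
  exact (SimpleGraph.connected_iff _).2
    ⟨fun x y => (hroot x).trans (hroot y).symm, ⟨c.root⟩⟩

theorem dist_root (x : c.X) : c.G.dist c.root x = c.lev x := by
  refine le_antisymm ?_ ?_
  · simpa [SimpleGraph.dist_comm, anc_zero] using dist_anc_le (x := x) (Nat.zero_le _)
  · obtain ⟨p, hp⟩ := c.connected.exists_walk_length_eq_dist x c.root
    rw [SimpleGraph.dist_comm, ← hp]
    simpa using p.le_add_length_of_adj (fun _ _ => lev_le_lev_add_one_of_adj)

theorem lev_le_lev_add_dist (x y : c.X) : c.lev x ≤ c.lev y + c.G.dist y x := by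
  simpa only [dist_root] using c.connected.dist_triangle (u := c.root) (v := y) (w := x)

theorem dist_le_lev_add_lev (x y : c.X) : c.G.dist x y ≤ c.lev x + c.lev y := by
  simpa only [SimpleGraph.dist_comm (u := x), dist_root] using
    c.connected.dist_triangle (u := x) (v := c.root) (w := y)

/-- A slanted edge from level `j` to level `j + 1` shortcuts the path through the ancestors. -/
theorem dist_le_of_setDist_cell_anc_le (hjx : j ≤ c.lev x) (hjy : j + 1 ≤ c.lev y)
    (hd : setDist (c.cell (c.anc x j)) (c.cell (c.anc y (j + 1))) ≤ c.κ * c.r ^ j) :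
    c.G.dist x y ≤ c.lev x + c.lev y - 2 * j := by
  have hadj : c.G.Adj (c.anc x j) (c.anc y (j + 1)) :=
    adj_of_lev_eq_add_one (by rw [lev_anc hjx, lev_anc hjy]) (by rwa [lev_anc hjx])
  have h1 := dist_anc_le hjx
  have h2 := dist_anc_le hjy
  rw [SimpleGraph.dist_comm] at h2
  have h3 := c.connected.dist_triangle (u := x) (v := c.anc x j) (w := y)
  have h4 := c.connected.dist_triangle (u := c.anc x j) (v := c.anc y (j + 1)) (w := y)
  rw [SimpleGraph.dist_eq_one_iff_adj.2 hadj] at h4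
  omega

theorem gprod_eq (x y : c.X) :
    gprod c.G c.root x y = ((c.lev x : ℝ) + c.lev y - c.G.dist x y) / 2 := by
  rw [gprod, dist_root, dist_root]

/-! ### Closeness of ancestors -/

variable (c)

/-- For an edge `uv`, `dist(K_u, K_v) + diam K_u ≤ edgeConst * r^|u|`. -/
noncomputable def edgeConst : ℝ := c.κ / c.r + c.D

theorem edgeConst_pos : 0 < c.edgeConst :=
  add_pos_of_pos_of_nonneg (div_pos c.κ_pos c.r_pos) diam_nonneg

theorem exists_spanConst : ∃ C : ℕ, ∀ n J : ℕ,
    (∀ s : ℕ, 1 ≤ s → c.edgeConst * n * c.r ^ s ≤ c.κ → n ≤ J + 2 * s) → n ≤ 2 * J + C :=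
  exists_le_two_mul_add_of_le_add_two_mul_log c.r_pos.le c.r_lt_one c.edgeConst_pos.le c.κ_pos

noncomputable def spanConst : ℕ := c.exists_spanConst.choose

noncomputable def sumConst : ℝ :=
  4 * (c.r / (1 - c.r) ^ 2) + (c.spanConst + 1) * (1 - c.r)⁻¹

/-- `β rˡ` bounds the distance between the cells at the ends of a geodesic whose lowest level
is `ℓ`. -/
noncomputable def β : ℝ := c.edgeConst * c.sumConst

theorem β_pos : 0 < c.β := by
  have := c.r_pos
  have := sub_pos.2 c.r_lt_one
  exact mul_pos c.edgeConst_pos (by unfold sumConst; positivity)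

theorem exists_edgeShift : ∃ t : ℕ, c.β * c.r ^ t ≤ c.κ ∧ 1 ≤ t :=
  ((eventually_mul_pow_le c.r_pos.le c.r_lt_one c.β c.κ_pos).and (eventually_ge_atTop 1)).exists

noncomputable def edgeShift : ℕ := c.exists_edgeShift.choose

theorem exists_ultraShift : ∃ s : ℕ, (2 * c.β + c.D) * c.r ^ s ≤ c.β :=
  (eventually_mul_pow_le c.r_pos.le c.r_lt_one _ c.β_pos).exists

noncomputable def ultraShift : ℕ := c.exists_ultraShift.choose

def CloseAt (x y : c.X) (j : ℕ) : Prop :=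
  setDist (c.cell (c.anc x j)) (c.cell (c.anc y j)) ≤ c.β * c.r ^ j

open Classical in
noncomputable def confluence (x y : c.X) : ℕ :=
  Nat.findGreatest (c.CloseAt x y) (min (c.lev x) (c.lev y))

variable {c}

theorem setDist_cell_anc_le {i' j' : ℕ} (hij : i ≤ j) (hjx : j ≤ c.lev x) (hij' : i' ≤ j')
    (hjy : j' ≤ c.lev y) :
    setDist (c.cell (c.anc x i)) (c.cell (c.anc y i'))
      ≤ setDist (c.cell (c.anc x j)) (c.cell (c.anc y j')) :=
  setDist_le_setDist_of_subset (cell_nonempty _) (cell_nonempty _)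
    (cell_anc_subset_cell_anc hij hjx) (cell_anc_subset_cell_anc hij' hjy)

theorem closeAt_zero (x y : c.X) : c.CloseAt x y 0 := by
  rw [CloseAt, anc_zero, anc_zero, cell_root, pow_zero, mul_one]
  exact (setDist_self_nonpos c.K_nonempty).trans c.β_pos.le

theorem CloseAt.mono (h : c.CloseAt x y j) (hij : i ≤ j) (hjx : j ≤ c.lev x)
    (hjy : j ≤ c.lev y) : c.CloseAt x y i :=
  calc setDist (c.cell (c.anc x i)) (c.cell (c.anc y i))
      ≤ setDist (c.cell (c.anc x j)) (c.cell (c.anc y j)) := setDist_cell_anc_le hij hjx hij hjy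
    _ ≤ c.β * c.r ^ j := h
    _ ≤ c.β * c.r ^ i := mul_le_mul_of_nonneg_left (c.pow_r_anti hij) c.β_pos.le

theorem confluence_le (x y : c.X) : c.confluence x y ≤ min (c.lev x) (c.lev y) := by
  classical
  exact Nat.findGreatest_le _

theorem le_confluence (hj : j ≤ min (c.lev x) (c.lev y)) (h : c.CloseAt x y j) :
    j ≤ c.confluence x y := by
  classical
  exact Nat.le_findGreatest hj h

theorem closeAt_confluence (x y : c.X) : c.CloseAt x y (c.confluence x y) := by
  classical
  exact Nat.findGreatest_spec (Nat.zero_le _) (closeAt_zero x y)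

theorem closeAt_of_le_confluence (h : j ≤ c.confluence x y) : c.CloseAt x y j := by
  have hle := confluence_le x y
  exact (closeAt_confluence x y).mono h (by omega) (by omega)

/-- Two close pairs at level `p` give a pair at distance `(2β + D) rᵖ`, which is close at
level `p - ultraShift`. -/
theorem min_confluence_le (x y z : c.X) :
    min (c.confluence x z) (c.confluence z y) ≤ c.confluence x y + c.ultraShift := by
  set p := min (c.confluence x z) (c.confluence z y)
  rcases lt_or_ge p c.ultraShift with hp | hp
  · omega
  have hxz := confluence_le x z
  have hzy := confluence_le z y
  have hpz : p ≤ c.lev z := by omega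
  have hxz' : c.CloseAt x z p := closeAt_of_le_confluence (min_le_left _ _)
  have hzy' : c.CloseAt z y p := closeAt_of_le_confluence (min_le_right _ _)
  have hdiam := diam_cell_le (c.anc z p)
  rw [lev_anc hpz] at hdiam
  have hxy : setDist (c.cell (c.anc x p)) (c.cell (c.anc y p)) ≤ (2 * c.β + c.D) * c.r ^ p := by
    have := setDist_triangle (cell_nonempty (c.anc x p)) (cell_nonempty (c.anc z p))
      (cell_nonempty (c.anc y p)) (isBounded_cell _)
    unfold CloseAt at hxz' hzy'
    linarith
  have hclose : c.CloseAt x y (p - c.ultraShift) := calc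
    setDist (c.cell (c.anc x (p - c.ultraShift))) (c.cell (c.anc y (p - c.ultraShift)))
        ≤ setDist (c.cell (c.anc x p)) (c.cell (c.anc y p)) :=
          setDist_cell_anc_le (Nat.sub_le _ _) (by omega) (Nat.sub_le _ _) (by omega)
    _ ≤ (2 * c.β + c.D) * c.r ^ c.ultraShift * c.r ^ (p - c.ultraShift) := by
          rwa [mul_assoc, ← pow_add, Nat.add_sub_cancel' hp]
    _ ≤ c.β * c.r ^ (p - c.ultraShift) :=
          mul_le_mul_of_nonneg_right c.exists_ultraShift.choose_spec (pow_pos c.r_pos _).le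
  have := le_confluence (by omega) hclose
  omega

/-! ### Comparing the Gromov product with the confluence level -/

/-- If the ancestors are close at level `j + edgeShift`, then `x|j` and `y|j+1` are adjacent. -/
theorem dist_add_two_mul_confluence_le (x y : c.X) :
    c.G.dist x y + 2 * c.confluence x y ≤ c.lev x + c.lev y + 2 * c.edgeShift := by
  have hshift : c.β * c.r ^ c.edgeShift ≤ c.κ := c.exists_edgeShift.choose_spec.1
  have hshift1 : 1 ≤ c.edgeShift := c.exists_edgeShift.choose_spec.2
  have hle := confluence_le x y
  have hroot := dist_le_lev_add_lev x y
  rcases lt_or_ge (c.confluence x y) c.edgeShift with hlt | hge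
  · omega
  obtain ⟨j, hj⟩ : ∃ j, c.confluence x y = j + c.edgeShift := ⟨_, (Nat.sub_add_cancel hge).symm⟩
  have hd : setDist (c.cell (c.anc x j)) (c.cell (c.anc y (j + 1))) ≤ c.κ * c.r ^ j := calc
    _ ≤ setDist (c.cell (c.anc x (c.confluence x y))) (c.cell (c.anc y (c.confluence x y))) :=
        setDist_cell_anc_le (by omega) (by omega) (by omega) (by omega)
    _ ≤ c.β * c.r ^ c.edgeShift * c.r ^ j := by
        rw [mul_assoc, ← pow_add, add_comm, ← hj]
        exact closeAt_confluence x y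
    _ ≤ c.κ * c.r ^ j := mul_le_mul_of_nonneg_right hshift (pow_pos c.r_pos _).le
  have := dist_le_of_setDist_cell_anc_le (by omega) (by omega) hd
  omega

theorem setDist_cell_getVert_le (p : c.G.Walk x y) {a b : ℕ} (hab : a ≤ b) (hb : b ≤ p.length) :
    setDist (c.cell (p.getVert a)) (c.cell (p.getVert b))
      ≤ c.edgeConst * ∑ i ∈ Finset.Ico a b, c.r ^ c.lev (p.getVert i) := by
  induction b, hab using Nat.le_induction with
  | base => simpa using setDist_self_nonpos (cell_nonempty _)
  | succ b hab ih =>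
    have hadj := p.adj_getVert_succ (show b < p.length by omega)
    rw [Finset.sum_Ico_succ_top hab, mul_add]
    calc _ ≤ _ := setDist_triangle (cell_nonempty _) (cell_nonempty _) (cell_nonempty _)
          (isBounded_cell (p.getVert b))
      _ ≤ c.edgeConst * ∑ i ∈ Finset.Ico a b, c.r ^ c.lev (p.getVert i)
          + c.D * c.r ^ c.lev (p.getVert b) + c.κ / c.r * c.r ^ c.lev (p.getVert b) := by
          gcongr
          exacts [ih (by omega), diam_cell_le _, setDist_cell_le_of_adj hadj]
      _ = _ := by rw [edgeConst]; ring

section Geodesic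

variable {p : c.G.Walk x y} {ℓ : ℕ}

/-- Between two vertices of level `≤ j` on a geodesic staying above level `ℓ`, a detour through
their ancestors at level `ℓ - s`, with `s ≈ log_{1/r}` of their distance, cannot be shorter. -/
theorem sub_le_of_lev_getVert_le (hp : p.length = c.G.dist x y)
    (hℓ : ∀ i ≤ p.length, ℓ ≤ c.lev (p.getVert i)) {a b : ℕ} (hab : a ≤ b) (hb : b ≤ p.length)
    (haj : c.lev (p.getVert a) ≤ j) (hbj : c.lev (p.getVert b) ≤ j) :
    b - a ≤ 4 * (j - ℓ) + c.spanConst := by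
  suffices ∀ s, 1 ≤ s → c.edgeConst * (b - a : ℕ) * c.r ^ s ≤ c.κ → b - a ≤ 2 * (j - ℓ) + 2 * s by
    have := c.exists_spanConst.choose_spec (b - a) (2 * (j - ℓ)) this
    rw [spanConst]
    omega
  intro s hs hsmall
  have hgeo := p.sub_le_dist_getVert c.connected hp hab hb
  have hla := hℓ a (by omega)
  have hlb := hℓ b hb
  rcases lt_or_ge ℓ s with hℓs | hsℓ
  · have := dist_le_lev_add_lev (p.getVert a) (p.getVert b)
    omega
  have hd : setDist (c.cell (c.anc (p.getVert a) (ℓ - s)))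
      (c.cell (c.anc (p.getVert b) (ℓ - s + 1))) ≤ c.κ * c.r ^ (ℓ - s) := calc
    _ ≤ setDist (c.cell (p.getVert a)) (c.cell (p.getVert b)) :=
        setDist_le_setDist_of_subset (cell_nonempty _) (cell_nonempty _)
          (cell_subset_cell_anc (by omega)) (cell_subset_cell_anc (by omega))
    _ ≤ c.edgeConst * ∑ i ∈ Finset.Ico a b, c.r ^ c.lev (p.getVert i) :=
        setDist_cell_getVert_le p hab hb
    _ ≤ c.edgeConst * ∑ i ∈ Finset.Ico a b, c.r ^ ℓ := by
        refine mul_le_mul_of_nonneg_left (Finset.sum_le_sum fun i hi => c.pow_r_anti (hℓ i ?_))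
          c.edgeConst_pos.le
        rw [Finset.mem_Ico] at hi
        omega
    _ = c.edgeConst * (b - a : ℕ) * c.r ^ s * c.r ^ (ℓ - s) := by
        have : c.r ^ ℓ = c.r ^ s * c.r ^ (ℓ - s) := by rw [← pow_add, Nat.add_sub_cancel' hsℓ]
        rw [Finset.sum_const, Nat.card_Ico, nsmul_eq_mul, this]
        ring
    _ ≤ c.κ * c.r ^ (ℓ - s) := mul_le_mul_of_nonneg_right hsmall (pow_pos c.r_pos _).le
  have := dist_le_of_setDist_cell_anc_le (by omega) (by omega) hd
  omega

theorem card_filter_lev_getVert_eq_le (hp : p.length = c.G.dist x y)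
    (hℓ : ∀ i ≤ p.length, ℓ ≤ c.lev (p.getVert i)) (j : ℕ) :
    #{i ∈ Finset.range p.length | c.lev (p.getVert i) = j} ≤ 4 * (j - ℓ) + (c.spanConst + 1) :=
  Finset.card_le_add_one_of_forall_sub_le fun i hi i' hi' hii' => by
    simp only [Finset.mem_filter, Finset.mem_range] at hi hi'
    exact sub_le_of_lev_getVert_le hp hℓ hii' hi'.1.le hi.2.le hi'.2.le

theorem sum_pow_lev_getVert_le (hp : p.length = c.G.dist x y)
    (hℓ : ∀ i ≤ p.length, ℓ ≤ c.lev (p.getVert i)) :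
    ∑ i ∈ Finset.range p.length, c.r ^ c.lev (p.getVert i) ≤ c.sumConst * c.r ^ ℓ := by
  simpa [sumConst] using sum_pow_le_of_card_fiber_le _ _ c.r_pos.le c.r_lt_one
    (fun i hi => hℓ i (Finset.mem_range.1 hi).le) (card_filter_lev_getVert_eq_le hp hℓ)

end Geodesic

/-- A geodesic from `x` to `y` descends to a lowest level `ℓ`, and the cells along it are close
enough for the ancestors at level `ℓ` to be close. -/
theorem lev_add_lev_le_dist_add (x y : c.X) :
    c.lev x + c.lev y ≤ c.G.dist x y + 2 * c.confluence x y := by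
  obtain ⟨p, hp⟩ := c.connected.exists_walk_length_eq_dist x y
  obtain ⟨i₀, hi₀, hmin⟩ := (Finset.range (p.length + 1)).exists_min_image
    (fun i => c.lev (p.getVert i)) ⟨0, by simp⟩
  set ℓ := c.lev (p.getVert i₀)
  have hℓ : ∀ i ≤ p.length, ℓ ≤ c.lev (p.getVert i) := fun i hi =>
    hmin i (Finset.mem_range.2 (Nat.lt_succ_of_le hi))
  have hi₀ : i₀ ≤ p.length := Nat.lt_succ_iff.1 (Finset.mem_range.1 hi₀)
  have hℓx : ℓ ≤ c.lev x := by simpa using hℓ 0 (Nat.zero_le _)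
  have hℓy : ℓ ≤ c.lev y := by simpa using hℓ _ le_rfl
  have hx : c.lev x ≤ ℓ + i₀ := by
    have h1 := lev_le_lev_add_dist x (p.getVert i₀)
    have h2 := p.dist_getVert_le (Nat.zero_le i₀)
    rw [p.getVert_zero, SimpleGraph.dist_comm] at h2
    omega
  have hy : c.lev y ≤ ℓ + (p.length - i₀) := by
    have h1 := lev_le_lev_add_dist y (p.getVert i₀)
    have h2 := p.dist_getVert_le hi₀
    rw [p.getVert_length] at h2
    omega
  have hclose : c.CloseAt x y ℓ := calc
    _ ≤ setDist (c.cell x) (c.cell y) :=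
        setDist_le_setDist_of_subset (cell_nonempty _) (cell_nonempty _)
          (cell_subset_cell_anc hℓx) (cell_subset_cell_anc hℓy)
    _ ≤ c.edgeConst * ∑ i ∈ Finset.range p.length, c.r ^ c.lev (p.getVert i) := by
        have h := setDist_cell_getVert_le p (Nat.zero_le p.length) le_rfl
        rwa [p.getVert_zero, p.getVert_length, ← Finset.range_eq_Ico] at h
    _ ≤ c.edgeConst * (c.sumConst * c.r ^ ℓ) :=
        mul_le_mul_of_nonneg_left (sum_pow_lev_getVert_le hp hℓ) c.edgeConst_pos.le
    _ = c.β * c.r ^ ℓ := by rw [β, mul_assoc]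
  have := le_confluence (le_min hℓx hℓy) hclose
  omega

variable (c)

theorem gromovHyperbolic : GromovHyperbolic c.G c.root := by
  refine gromovHyperbolic_of_approx_ultrametric c.G c.root (fun x y => c.confluence x y)
    c.ultraShift.cast_nonneg c.edgeShift.cast_nonneg (fun x y z => ?_) (fun x y => ?_)
    (fun x y => ?_)
  · exact_mod_cast min_confluence_le x y z
  · have : (c.lev x + c.lev y : ℝ) ≤ c.G.dist x y + 2 * c.confluence x y := by
      exact_mod_cast lev_add_lev_le_dist_add x y
    rw [gprod_eq]
    linarith
  · have : (c.G.dist x y + 2 * c.confluence x y : ℝ) ≤ c.lev x + c.lev y + 2 * c.edgeShift := by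
      exact_mod_cast dist_add_two_mul_confluence_le x y
    rw [gprod_eq]
    linarith

end SlantedIFS

/-- Theorem 6.2 (first part): the graph `(X, 𝓔_v ∪ 𝓔_s)` with slanted edges of
an IFS of contractive similitudes is Gromov hyperbolic. -/
theorem slanted_graph_hyperbolic {d N : ℕ}
    (S : Fin N → Euc d → Euc d) (ρ : Fin N → ℝ) (r κ : ℝ) (K : Set (Euc d))
    (hρ0 : ∀ j, 0 < ρ j) (hρ1 : ∀ j, ρ j < 1)
    (hsim : ∀ j a b, dist (S j a) (S j b) = ρ j * dist a b)
    (hr : IsLeast (Set.range ρ) r) (hκ : 0 < κ)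
    (hKc : IsCompact K) (hKne : K.Nonempty) (hKinv : K = ⋃ j, S j '' K) :
    GromovHyperbolic (slantV S ρ r κ K)
      ⟨([] : List (Fin N)), 0, by simp [Jlevel]⟩ :=
  SlantedIFS.gromovHyperbolic ⟨S, ρ, r, κ, K, hρ0, hρ1, hsim, hr, hκ, hKc, hKne, hKinv⟩

end HypIFS
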